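/- Under the setting of the extrapolated PD-PIAG iteration (g_k = Σ_i ∇f_i(x_{k−τ_k^i}), x_{k+1} = x_k − σ g_k − σ Kᵀ(2y_k − y_{k−1}), y_{k+1} = Prox_{τ h*}(y_k + τ K x_{k+1})) with f_i convex and L_i-smooth, h* proper closed convex, delays bounded by T, and step sizes σ, τ > 0, the following telescoped bound holds for every M ≥ 1 and every (x,y): ‖x − x_0‖²/(2σ) + ‖y − y_0‖²/(2τ) ≥ Σ_{k=1}^M (L(x_k, y) − L(x, y_k)) + (1 − τσ‖K‖²) ‖x − x_M‖²/(2σ) + ‖y − y_M‖²/(2τ) + (1 − √(τσ)‖K‖ − σL(T+1)²) Σ_{k=1}^M ‖x_k − x_{k−1}‖²/(2σ) + (1 − √(τσ)‖K‖) Σ_{k=1}^{M−1} ‖y_k − y_{k−1}‖²/(2τ), where L = Σ_i L_i and L(x,y) = f(x) + ⟨Kx,y⟩ − h*(y). -/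

import Mathlib

open scoped RealInnerProductSpace
open Filter Topology

noncomputable section

/-- `L`-smoothness of a real-valued function, in the sense of assumption A1:
differentiability together with the two-sided quadratic bound. -/
def LSmooth {d : ℕ} (g : EuclideanSpace ℝ (Fin d) → ℝ) (L : ℝ) : Prop :=
  Differentiable ℝ g ∧
    ∀ x y : EuclideanSpace ℝ (Fin d),
      |g y - g x - ⟪gradient g x, y - x⟫| ≤ L / 2 * ‖y - x‖ ^ 2

/-- Assumption B1: `δ`-strong convexity in the weak sense (`δ` may be negative). -/
def WeakStrConvex {d : ℕ} (g : EuclideanSpace ℝ (Fin d) → ℝ) (δ : ℝ) : Prop :=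
  ∀ x y : EuclideanSpace ℝ (Fin d),
    g x + ⟪gradient g x, y - x⟫ + δ / 2 * ‖y - x‖ ^ 2 ≤ g y

/-- Properness of an `EReal`-valued function: finite somewhere and never `⊥`. -/
def EProper {d : ℕ} (g : EuclideanSpace ℝ (Fin d) → EReal) : Prop :=
  (∃ z, g z ≠ ⊤) ∧ ∀ z, g z ≠ ⊥

/-- Convexity of an `EReal`-valued function. -/
def EConvexFn {d : ℕ} (g : EuclideanSpace ℝ (Fin d) → EReal) : Prop :=
  ∀ z w : EuclideanSpace ℝ (Fin d), ∀ a b : ℝ, 0 ≤ a → 0 ≤ b → a + b = 1 →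
    g (a • z + b • w) ≤ (a : EReal) * g z + (b : EReal) * g w

/-- Assumption B2: `γ`-strong convexity of an `EReal`-valued function, stated via
subgradients: for every subgradient `v` of `g` at `z` one has the quadratic lower bound. -/
def EStrongConvexFn {d : ℕ} (g : EuclideanSpace ℝ (Fin d) → EReal) (γ : ℝ) : Prop :=
  ∀ z v : EuclideanSpace ℝ (Fin d),
    (∀ u, g z + ((⟪v, u - z⟫ : ℝ) : EReal) ≤ g u) →
      ∀ u, g z + ((⟪v, u - z⟫ + γ / 2 * ‖u - z‖ ^ 2 : ℝ) : EReal) ≤ g u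

/-- `p = Prox_g(z)`: `p` minimizes `u ↦ g u + ‖u - z‖² / 2`. -/
def IsProxPt {d : ℕ} (g : EuclideanSpace ℝ (Fin d) → EReal)
    (z p : EuclideanSpace ℝ (Fin d)) : Prop :=
  ∀ u, g p + ((‖p - z‖ ^ 2 / 2 : ℝ) : EReal) ≤ g u + ((‖u - z‖ ^ 2 / 2 : ℝ) : EReal)

/-- The Lagrangian `L(x, y) = f x + ⟪K x, y⟫ - h*(y)`, valued in `EReal`. -/
def Lagr {d₁ d₂ : ℕ} (f : EuclideanSpace ℝ (Fin d₁) → ℝ)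
    (hstar : EuclideanSpace ℝ (Fin d₂) → EReal)
    (K : EuclideanSpace ℝ (Fin d₁) →L[ℝ] EuclideanSpace ℝ (Fin d₂))
    (x : EuclideanSpace ℝ (Fin d₁)) (y : EuclideanSpace ℝ (Fin d₂)) : EReal :=
  (f x : EReal) + ((⟪K x, y⟫ : ℝ) : EReal) - hstar y

/-- `(xh, yh)` is a saddle point of `Lg`. -/
def IsSaddlePt {d₁ d₂ : ℕ}
    (Lg : EuclideanSpace ℝ (Fin d₁) → EuclideanSpace ℝ (Fin d₂) → EReal)
    (xh : EuclideanSpace ℝ (Fin d₁)) (yh : EuclideanSpace ℝ (Fin d₂)) : Prop :=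
  ∀ (x : EuclideanSpace ℝ (Fin d₁)) (y : EuclideanSpace ℝ (Fin d₂)),
    Lg xh y ≤ Lg xh yh ∧ Lg xh yh ≤ Lg x yh

/-!
In one step, convexity and `Lᵢ`-smoothness of each `fᵢ`, linearised at its delayed point, bound
the primal part of the Lagrangian gap at `(xp, yp)`, and the three-point inequality of the
proximal step bounds the dual part. Thanks to the extrapolation `2 y_k - y_{k-1}` the coupling
terms telescope through
`Φ_k = ‖xp - x_k‖² / (2σ) + ‖yp - y_k‖² / (2τ) - ⟪K (x_k - xp), y_k - y_{k-1}⟫`,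
up to `⟪K (x_{k+1} - x_k), y_k - y_{k-1}⟫` and the coupling term of `Φ_M`, which Young's
inequality absorbs into the squared increments. A delay error `‖x_{k+1} - x_{k-d}‖²` with `d ≤ T`
is at most `T + 1` times the sum of the `T + 1` preceding squared increments (Cauchy–Schwarz),
and each increment occurs in at most `T + 1` such windows: hence the factor `(T + 1)²`.
-/

open Finset

theorem le_of_forall_pos_le_add_mul {a b c : ℝ}
    (h : ∀ t : ℝ, 0 < t → t ≤ 1 → a ≤ b + t * c) : a ≤ b := by
  have hlim : Tendsto (fun t : ℝ => b + t * c) (𝓝[>] 0) (𝓝 b) := by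
    have hcont : Continuous fun t : ℝ => b + t * c := by fun_prop
    simpa using (hcont.tendsto 0).mono_left nhdsWithin_le_nhds
  refine ge_of_tendsto hlim ?_
  filter_upwards [Ioc_mem_nhdsGT one_pos] with t ht using h t ht.1 ht.2

theorem mul_le_young {ε : ℝ} (hε : 0 < ε) (a b : ℝ) :
    a * b ≤ ε / 2 * a ^ 2 + b ^ 2 / (2 * ε) := by
  have key : ε / 2 * a ^ 2 + b ^ 2 / (2 * ε) - a * b = (ε * a - b) ^ 2 / (2 * ε) := by
    field_simp; ring
  have : 0 ≤ (ε * a - b) ^ 2 / (2 * ε) := by positivity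
  linarith

theorem EReal.coe_finset_sum {ι : Type*} (s : Finset ι) (g : ι → ℝ) :
    ((∑ i ∈ s, g i : ℝ) : EReal) = ∑ i ∈ s, (g i : EReal) :=
  map_sum (⟨⟨((↑) : ℝ → EReal), EReal.coe_zero⟩, EReal.coe_add⟩ : ℝ →+ EReal) g s

theorem sum_Icc_one_eq_sum_range {β : Type*} [AddCommMonoid β] (g : ℤ → β) (M : ℕ) :
    ∑ k ∈ Icc (1 : ℤ) M, g k = ∑ n ∈ range M, g (n + 1) := by
  induction M with
  | zero => simp
  | succ M ih =>
    rw [sum_range_succ, ← ih, Nat.cast_succ, ← insert_Icc_right_eq_Icc_add_one (by omega),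
      sum_insert (by simp), add_comm]

theorem sum_range_sub_le_sum_range {a : ℤ → ℝ} (ha : ∀ m, 0 ≤ a m) (ha0 : ∀ m < 0, a m = 0)
    (j M : ℕ) : ∑ n ∈ range M, a (n - j) ≤ ∑ n ∈ range M, a n := by
  induction j generalizing M with
  | zero => simp
  | succ j ih =>
    cases M with
    | zero => simp
    | succ M =>
      calc ∑ n ∈ range (M + 1), a (n - (j + 1 : ℕ))
          = ∑ n ∈ range M, a (n - j) := by
            rw [sum_range_succ', ha0 _ (by omega), add_zero]
            push_cast
            simp only [add_sub_add_right_eq_sub]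
        _ ≤ ∑ n ∈ range M, a n := ih M
        _ ≤ ∑ n ∈ range (M + 1), a n := by
            rw [sum_range_succ]; linarith [ha M]

section SeminormedAddCommGroup

variable {E : Type*} [SeminormedAddCommGroup E]

theorem norm_sub_sq_le_mul_sum_range (x : ℤ → E) (n : ℤ) (d : ℕ) :
    ‖x (n + 1) - x (n - d)‖ ^ 2
      ≤ (d + 1) * ∑ j ∈ range (d + 1), ‖x (n - j + 1) - x (n - j)‖ ^ 2 := by
  have htel : x (n + 1) - x (n - d) = ∑ j ∈ range (d + 1), (x (n - j + 1) - x (n - j)) := by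
    have := sum_range_sub' (fun j : ℕ => x (n - j + 1)) (d + 1)
    push_cast at this
    simpa only [sub_zero, ← sub_sub, sub_add_cancel] using this.symm
  calc ‖x (n + 1) - x (n - d)‖ ^ 2
      ≤ (∑ j ∈ range (d + 1), ‖x (n - j + 1) - x (n - j)‖) ^ 2 := by
        rw [htel]; gcongr; exact norm_sum_le _ _
    _ ≤ _ := by
        simpa using sq_sum_le_card_mul_sum_sq (s := range (d + 1))
          (f := fun j : ℕ => ‖x (n - j + 1) - x (n - j)‖)

theorem norm_sub_sq_le_mul_sum_range_of_le (x : ℤ → E) (n : ℤ) {d T : ℕ} (hd : d ≤ T) :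
    ‖x (n + 1) - x (n - d)‖ ^ 2
      ≤ (T + 1) * ∑ j ∈ range (T + 1), ‖x (n - j + 1) - x (n - j)‖ ^ 2 := by
  refine (norm_sub_sq_le_mul_sum_range x n d).trans ?_
  gcongr

theorem sum_delayed_norm_sub_sq_le {ι : Type*} [Fintype ι] {x : ℤ → E} (hx0 : ∀ k ≤ 0, x k = x 0)
    {c : ι → ℝ} (hc : ∀ i, 0 ≤ c i) {T : ℕ} {dly : ℤ → ι → ℕ} (hdly : ∀ k i, dly k i ≤ T)
    (M : ℕ) :
    ∑ n ∈ range M, ∑ i, c i * ‖x (n + 1) - x (n - dly n i)‖ ^ 2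
      ≤ (∑ i, c i) * (T + 1) ^ 2 * ∑ n ∈ range M, ‖x (n + 1) - x n‖ ^ 2 := by
  set b : ℤ → ℝ := fun m => ‖x (m + 1) - x m‖ ^ 2
  have hb0 : ∀ m < 0, b m = 0 := fun m hm => by simp [b, hx0 m hm.le, hx0 (m + 1) (by omega)]
  have hc' : 0 ≤ ∑ i, c i := sum_nonneg fun i _ => hc i
  calc ∑ n ∈ range M, ∑ i, c i * ‖x (n + 1) - x (n - dly n i)‖ ^ 2
      ≤ ∑ n ∈ range M, ∑ i, c i * ((T + 1) * ∑ j ∈ range (T + 1), b (n - j)) := by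
        gcongr with n _ i _
        exacts [hc i, norm_sub_sq_le_mul_sum_range_of_le x n (hdly n i)]
    _ = (∑ i, c i) * (T + 1) * ∑ j ∈ range (T + 1), ∑ n ∈ range M, b (n - j) := by
        rw [sum_comm (s := range (T + 1))]
        simp only [← sum_mul, ← mul_sum]
        ring
    _ ≤ (∑ i, c i) * (T + 1) * ∑ j ∈ range (T + 1), ∑ n ∈ range M, b n := by
        gcongr ?_ * ?_
        exact sum_le_sum fun j _ => sum_range_sub_le_sum_range (fun m => by positivity) hb0 j M
    _ = _ := by simp only [sum_const, card_range, nsmul_eq_mul, b]; push_cast; ring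

end SeminormedAddCommGroup

section InnerProductSpace

variable {E F : Type*} [NormedAddCommGroup E] [InnerProductSpace ℝ E]
  [NormedAddCommGroup F] [InnerProductSpace ℝ F]

theorem two_mul_inner_sub_sub_eq (a b c : E) :
    2 * ⟪a - b, b - c⟫ = ‖a - c‖ ^ 2 - ‖a - b‖ ^ 2 - ‖b - c‖ ^ 2 := by
  rw [show a - c = (a - b) + (b - c) by abel, norm_add_sq_real]; ring

theorem abs_inner_apply_le (K : E →L[ℝ] F) (u : E) (v : F) :
    |⟪K u, v⟫| ≤ ‖K‖ * ‖u‖ * ‖v‖ :=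
  (abs_real_inner_le_norm _ _).trans (by gcongr; exact K.le_opNorm u)

theorem inner_apply_le_young (K : E →L[ℝ] F) {τ : ℝ} (hτ : 0 < τ) (u : E) (v : F) :
    ⟪K u, v⟫ ≤ τ / 2 * ‖K‖ ^ 2 * ‖u‖ ^ 2 + ‖v‖ ^ 2 / (2 * τ) := by
  have := mul_le_young hτ (‖K‖ * ‖u‖) ‖v‖
  linarith [(le_abs_self _).trans (abs_inner_apply_le K u v)]

theorem abs_inner_apply_le_sqrt_mul (K : E →L[ℝ] F) {σ τ : ℝ} (hσ : 0 < σ) (hτ : 0 < τ)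
    (u : E) (v : F) :
    |⟪K u, v⟫| ≤ √(τ * σ) * ‖K‖ * (‖u‖ ^ 2 / (2 * σ) + ‖v‖ ^ 2 / (2 * τ)) := by
  have hs : 0 < √(τ * σ) := by positivity
  -- Young's inequality with weight `ε = √(τσ) / σ`, whose inverse is `√(τσ) / τ`
  have hinv : ‖v‖ ^ 2 / (2 * (√(τ * σ) / σ)) = √(τ * σ) * (‖v‖ ^ 2 / (2 * τ)) := by
    field_simp
    rw [Real.sq_sqrt (by positivity)]
    ring
  calc |⟪K u, v⟫| ≤ ‖K‖ * (‖u‖ * ‖v‖) := by rw [← mul_assoc]; exact abs_inner_apply_le K u v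
    _ ≤ ‖K‖ * (√(τ * σ) / σ / 2 * ‖u‖ ^ 2 + ‖v‖ ^ 2 / (2 * (√(τ * σ) / σ))) := by
        gcongr; exact mul_le_young (div_pos hs hσ) _ _
    _ = _ := by rw [hinv]; ring

theorem ConvexOn.sub_le_inner_of_prox {s : Set E} {φ : E → ℝ} (hφ : ConvexOn ℝ s φ)
    {τ : ℝ} (hτ : 0 < τ) {y v p : E} (hp : p ∈ s)
    (hmin : ∀ u ∈ s, τ * φ p + ‖p - (y + τ • v)‖ ^ 2 / 2 ≤ τ * φ u + ‖u - (y + τ • v)‖ ^ 2 / 2)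
    {u : E} (hu : u ∈ s) :
    φ p - φ u ≤ ⟪v, p - u⟫ + (‖u - y‖ ^ 2 - ‖u - p‖ ^ 2 - ‖p - y‖ ^ 2) / (2 * τ) := by
  -- first-order optimality of `p`, tested along the segment from `p` to `u`
  have hopt : τ * φ p ≤ τ * φ u + ⟪p - (y + τ • v), u - p⟫ := by
    refine le_of_forall_pos_le_add_mul (c := ‖u - p‖ ^ 2 / 2) fun t ht0 ht1 => ?_
    have hseg : (1 - t) • p + t • u = p + t • (u - p) := by module
    have ht : (0 : ℝ) ≤ 1 - t := by linarith
    have hmem : p + t • (u - p) ∈ s := hseg ▸ hφ.1 hp hu ht ht0.le (by ring)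
    have hconv : φ (p + t • (u - p)) ≤ (1 - t) * φ p + t * φ u := by
      simpa only [hseg, smul_eq_mul] using hφ.2 hp hu ht ht0.le (by ring)
    have hm := hmin _ hmem
    rw [show p + t • (u - p) - (y + τ • v) = (p - (y + τ • v)) + t • (u - p) by abel,
      norm_add_sq_real, real_inner_smul_right, norm_smul, mul_pow, Real.norm_eq_abs, sq_abs] at hm
    have : t * (τ * φ p) ≤ t * (τ * φ u + ⟪p - (y + τ • v), u - p⟫ + t * (‖u - p‖ ^ 2 / 2)) := by
      nlinarith
    exact le_of_mul_le_mul_left this ht0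
  have h3 := two_mul_inner_sub_sub_eq u p y
  have hw : ⟪p - (y + τ • v), u - p⟫ = ⟪u - p, p - y⟫ + τ * ⟪v, p - u⟫ := by
    rw [sub_add_eq_sub_sub, inner_sub_left, real_inner_smul_left, real_inner_comm (u - p),
      ← neg_sub u p, inner_neg_right]
    ring
  have e : τ * (⟪v, p - u⟫ + (‖u - y‖ ^ 2 - ‖u - p‖ ^ 2 - ‖p - y‖ ^ 2) / (2 * τ))
      = τ * ⟪v, p - u⟫ + (‖u - y‖ ^ 2 - ‖u - p‖ ^ 2 - ‖p - y‖ ^ 2) / 2 := by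
    field_simp
  refine le_of_mul_le_mul_left ?_ hτ
  rw [e]
  linarith

end InnerProductSpace

section Euclidean

variable {d : ℕ}

theorem LSmooth.nonneg [Nontrivial (EuclideanSpace ℝ (Fin d))]
    {g : EuclideanSpace ℝ (Fin d) → ℝ} {L : ℝ} (hg : LSmooth g L) : 0 ≤ L := by
  obtain ⟨v, hv⟩ := exists_ne (0 : EuclideanSpace ℝ (Fin d))
  have h := (abs_nonneg _).trans (hg.2 0 v)
  have hv' : 0 < ‖v - 0‖ ^ 2 := by rw [sub_zero]; exact pow_pos (norm_pos_iff.2 hv) 2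
  linarith [nonneg_of_mul_nonneg_left h hv']

theorem LSmooth.add_inner_gradient_le {g : EuclideanSpace ℝ (Fin d) → ℝ} {L : ℝ}
    (hg : LSmooth g L) (hc : ConvexOn ℝ Set.univ g) (z w : EuclideanSpace ℝ (Fin d)) :
    g z + ⟪gradient g z, w - z⟫ ≤ g w := by
  refine le_of_forall_pos_le_add_mul (c := L / 2 * ‖w - z‖ ^ 2) fun t ht0 ht1 => ?_
  have hconv : g (z + t • (w - z)) ≤ (1 - t) * g z + t * g w := by
    have hseg : (1 - t) • z + t • w = z + t • (w - z) := by module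
    simpa only [hseg, smul_eq_mul] using
      hc.2 (Set.mem_univ z) (Set.mem_univ w) (by linarith : (0 : ℝ) ≤ 1 - t) ht0.le (by ring)
  have hsmooth := (abs_le.mp (hg.2 z (z + t • (w - z)))).1
  rw [add_sub_cancel_left, real_inner_smul_right, norm_smul, mul_pow, Real.norm_eq_abs,
    sq_abs] at hsmooth
  have : t * (g z + ⟪gradient g z, w - z⟫) ≤ t * (g w + t * (L / 2 * ‖w - z‖ ^ 2)) := by
    nlinarith
  exact le_of_mul_le_mul_left this ht0

theorem LSmooth.sub_le_inner_gradient_add {g : EuclideanSpace ℝ (Fin d) → ℝ} {L : ℝ}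
    (hg : LSmooth g L) (hc : ConvexOn ℝ Set.univ g) (z a b : EuclideanSpace ℝ (Fin d)) :
    g a - g b ≤ ⟪gradient g z, a - b⟫ + L / 2 * ‖a - z‖ ^ 2 := by
  have hup := (abs_le.mp (hg.2 z a)).2
  have hlo := hg.add_inner_gradient_le hc z b
  have hsplit : ⟪gradient g z, a - b⟫ = ⟪gradient g z, a - z⟫ - ⟪gradient g z, b - z⟫ := by
    rw [← inner_sub_right, sub_sub_sub_cancel_right]
  linarith

theorem EConvexFn.convexOn_toReal {g : EuclideanSpace ℝ (Fin d) → EReal} (hg : EConvexFn g)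
    (hbot : ∀ z, g z ≠ ⊥) : ConvexOn ℝ {z | g z ≠ ⊤} (fun z => (g z).toReal) := by
  have hle : ∀ z ∈ {z | g z ≠ ⊤}, ∀ w ∈ {z | g z ≠ ⊤}, ∀ a b : ℝ, 0 ≤ a → 0 ≤ b → a + b = 1 →
      g (a • z + b • w) ≤ ((a * (g z).toReal + b * (g w).toReal : ℝ) : EReal) := by
    intro z hz w hw a b ha hb hab
    have h := hg z w a b ha hb hab
    rwa [← EReal.coe_toReal hz (hbot z), ← EReal.coe_toReal hw (hbot w)] at h
  refine ⟨fun z hz w hw a b ha hb hab => ?_, fun z hz w hw a b ha hb hab => ?_⟩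
  · exact ne_top_of_le_ne_top (EReal.coe_ne_top _) (hle z hz w hw a b ha hb hab)
  · have h := hle z hz w hw a b ha hb hab
    rw [← EReal.coe_toReal (ne_top_of_le_ne_top (EReal.coe_ne_top _) h) (hbot _)] at h
    exact_mod_cast h

theorem IsProxPt.ne_top {g : EuclideanSpace ℝ (Fin d) → EReal} {τ : ℝ} (hτ : 0 < τ)
    (hbot : ∀ z, g z ≠ ⊥) {z₀ : EuclideanSpace ℝ (Fin d)} (hz₀ : g z₀ ≠ ⊤)
    {z p : EuclideanSpace ℝ (Fin d)} (hp : IsProxPt (fun u => (τ : EReal) * g u) z p) :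
    g p ≠ ⊤ := by
  intro htop
  have h := hp z₀
  beta_reduce at h
  rw [htop, EReal.coe_mul_top_of_pos hτ, EReal.top_add_coe, ← EReal.coe_toReal hz₀ (hbot z₀),
    ← EReal.coe_mul, ← EReal.coe_add, top_le_iff] at h
  exact EReal.coe_ne_top _ h

theorem IsProxPt.toReal_le {g : EuclideanSpace ℝ (Fin d) → EReal} {τ : ℝ}
    (hbot : ∀ z, g z ≠ ⊥) {z p : EuclideanSpace ℝ (Fin d)}
    (hp : IsProxPt (fun u => (τ : EReal) * g u) z p) (hpfin : g p ≠ ⊤)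
    {u : EuclideanSpace ℝ (Fin d)} (hu : g u ≠ ⊤) :
    τ * (g p).toReal + ‖p - z‖ ^ 2 / 2 ≤ τ * (g u).toReal + ‖u - z‖ ^ 2 / 2 := by
  have h := hp u
  beta_reduce at h
  rw [← EReal.coe_toReal hpfin (hbot p), ← EReal.coe_toReal hu (hbot u)] at h
  exact_mod_cast h

end Euclidean

theorem Lagr_eq_coe {d₁ d₂ : ℕ} (f : EuclideanSpace ℝ (Fin d₁) → ℝ)
    {hstar : EuclideanSpace ℝ (Fin d₂) → EReal}
    (K : EuclideanSpace ℝ (Fin d₁) →L[ℝ] EuclideanSpace ℝ (Fin d₂))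
    (x : EuclideanSpace ℝ (Fin d₁)) {y : EuclideanSpace ℝ (Fin d₂)}
    (hy : hstar y ≠ ⊤) (hbot : hstar y ≠ ⊥) :
    Lagr f hstar K x y = ((f x + ⟪K x, y⟫ - (hstar y).toReal : ℝ) : EReal) := by
  obtain ⟨r, hr⟩ : ∃ r : ℝ, hstar y = r := ⟨_, (EReal.coe_toReal hy hbot).symm⟩
  rw [Lagr, hr, EReal.toReal_coe]
  norm_cast

theorem Lagr_eq_bot {d₁ d₂ : ℕ} (f : EuclideanSpace ℝ (Fin d₁) → ℝ)
    {hstar : EuclideanSpace ℝ (Fin d₂) → EReal}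
    (K : EuclideanSpace ℝ (Fin d₁) →L[ℝ] EuclideanSpace ℝ (Fin d₂))
    (x : EuclideanSpace ℝ (Fin d₁)) {y : EuclideanSpace ℝ (Fin d₂)} (hy : hstar y = ⊤) :
    Lagr f hstar K x y = ⊥ := by
  rw [Lagr, hy, EReal.sub_top]

theorem pdpiag_step_le {d₁ d₂ N : ℕ} {f : Fin N → EuclideanSpace ℝ (Fin d₁) → ℝ}
    {Lc : Fin N → ℝ} (hconv : ∀ i, ConvexOn ℝ Set.univ (f i))
    (hsmooth : ∀ i, LSmooth (f i) (Lc i)) (φ : EuclideanSpace ℝ (Fin d₂) → ℝ)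
    (K : EuclideanSpace ℝ (Fin d₁) →L[ℝ] EuclideanSpace ℝ (Fin d₂)) {σ τ : ℝ} (hσ : 0 < σ)
    {x x' xp : EuclideanSpace ℝ (Fin d₁)} (z : Fin N → EuclideanSpace ℝ (Fin d₁))
    {y₀ y y' yp : EuclideanSpace ℝ (Fin d₂)}
    (hx : x' = x - σ • ∑ i, gradient (f i) (z i)
      - σ • (ContinuousLinearMap.adjoint K) ((2 : ℝ) • y - y₀))
    (hy : φ y' - φ yp
      ≤ ⟪K x', y' - yp⟫ + (‖yp - y‖ ^ 2 - ‖yp - y'‖ ^ 2 - ‖y' - y‖ ^ 2) / (2 * τ)) :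
    (∑ i, f i x' + ⟪K x', yp⟫ - φ yp) - (∑ i, f i xp + ⟪K xp, y'⟫ - φ y')
      ≤ (‖xp - x‖ ^ 2 - ‖xp - x'‖ ^ 2 - ‖x' - x‖ ^ 2) / (2 * σ)
        + (‖yp - y‖ ^ 2 - ‖yp - y'‖ ^ 2 - ‖y' - y‖ ^ 2) / (2 * τ)
        + ⟪K (x' - xp), y' - y⟫ - ⟪K (x - xp), y - y₀⟫ - ⟪K (x' - x), y - y₀⟫
        + ∑ i, Lc i / 2 * ‖x' - z i‖ ^ 2 := by
  set g := ∑ i, gradient (f i) (z i)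
  set w := (ContinuousLinearMap.adjoint K) ((2 : ℝ) • y - y₀)
  have hf : ∑ i, f i x' - ∑ i, f i xp ≤ ⟪g, x' - xp⟫ + ∑ i, Lc i / 2 * ‖x' - z i‖ ^ 2 := by
    rw [← sum_sub_distrib, sum_inner, ← sum_add_distrib]
    exact sum_le_sum fun i _ => (hsmooth i).sub_le_inner_gradient_add (hconv i) (z i) x' xp
  have hprimal : ⟪g + w, x' - xp⟫ = (‖xp - x‖ ^ 2 - ‖xp - x'‖ ^ 2 - ‖x' - x‖ ^ 2) / (2 * σ) := by
    have h3 := two_mul_inner_sub_sub_eq x x' xp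
    rw [norm_sub_rev x xp, norm_sub_rev x x', norm_sub_rev x' xp,
      show x - x' = σ • (g + w) by rw [hx]; module, real_inner_smul_left] at h3
    rw [eq_div_iff (by positivity)]
    linarith
  have hw : ⟪w, x' - xp⟫ = ⟪K (x' - xp), (2 : ℝ) • y - y₀⟫ := by
    rw [ContinuousLinearMap.adjoint_inner_left, real_inner_comm]
  have hcoupling : ⟪K x', yp⟫ - ⟪K xp, y'⟫ + ⟪K x', y' - yp⟫ - ⟪K (x' - xp), (2 : ℝ) • y - y₀⟫
      = ⟪K (x' - xp), y' - y⟫ - ⟪K (x - xp), y - y₀⟫ - ⟪K (x' - x), y - y₀⟫ := by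
    simp only [map_sub, inner_sub_left, inner_sub_right, real_inner_smul_right]
    ring
  rw [inner_add_left, hw] at hprimal
  linarith

theorem pdpiag_telescoped_bound_real {d₁ d₂ N T : ℕ} {f : Fin N → EuclideanSpace ℝ (Fin d₁) → ℝ}
    {Lc : Fin N → ℝ} (hconv : ∀ i, ConvexOn ℝ Set.univ (f i))
    (hsmooth : ∀ i, LSmooth (f i) (Lc i)) (φ : EuclideanSpace ℝ (Fin d₂) → ℝ)
    (K : EuclideanSpace ℝ (Fin d₁) →L[ℝ] EuclideanSpace ℝ (Fin d₂)) {σ τ : ℝ}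
    (hσ : 0 < σ) (hτ : 0 < τ)
    {x : ℤ → EuclideanSpace ℝ (Fin d₁)} {y : ℤ → EuclideanSpace ℝ (Fin d₂)}
    (hx0 : ∀ k : ℤ, k ≤ 0 → x k = x 0) (hy0 : ∀ k : ℤ, k ≤ 0 → y k = y 0)
    {dly : ℤ → Fin N → ℕ} (hdly : ∀ (k : ℤ) (i : Fin N), dly k i ≤ T)
    (hxiter : ∀ k : ℤ, 0 ≤ k →
      x (k + 1) = x k - σ • (∑ i, gradient (f i) (x (k - (dly k i : ℤ))))
        - σ • (ContinuousLinearMap.adjoint K) ((2 : ℝ) • y k - y (k - 1)))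
    (yp : EuclideanSpace ℝ (Fin d₂))
    (hdual : ∀ k : ℤ, 0 ≤ k → φ (y (k + 1)) - φ yp ≤ ⟪K (x (k + 1)), y (k + 1) - yp⟫
      + (‖yp - y k‖ ^ 2 - ‖yp - y (k + 1)‖ ^ 2 - ‖y (k + 1) - y k‖ ^ 2) / (2 * τ))
    (M : ℕ) (hM : 1 ≤ M) (xp : EuclideanSpace ℝ (Fin d₁)) :
    ∑ k ∈ Icc (1 : ℤ) M,
        ((∑ i, f i (x k) + ⟪K (x k), yp⟫ - φ yp) - (∑ i, f i xp + ⟪K xp, y k⟫ - φ (y k)))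
      + ((1 - τ * σ * ‖K‖ ^ 2) * (‖xp - x M‖ ^ 2 / (2 * σ)) + ‖yp - y M‖ ^ 2 / (2 * τ)
        + (1 - √(τ * σ) * ‖K‖ - σ * (∑ i, Lc i) * ((T : ℝ) + 1) ^ 2)
          * ∑ k ∈ Icc (1 : ℤ) M, ‖x k - x (k - 1)‖ ^ 2 / (2 * σ)
        + (1 - √(τ * σ) * ‖K‖) * ∑ k ∈ Icc (1 : ℤ) (M - 1), ‖y k - y (k - 1)‖ ^ 2 / (2 * τ))
      ≤ ‖xp - x 0‖ ^ 2 / (2 * σ) + ‖yp - y 0‖ ^ 2 / (2 * τ) := by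
  obtain ⟨m, rfl⟩ : ∃ m, M = m + 1 := ⟨M - 1, by omega⟩
  rw [show ((m + 1 : ℕ) : ℤ) - 1 = m by push_cast; ring]
  simp only [sum_Icc_one_eq_sum_range, add_sub_cancel_right]
  push_cast
  set c := √(τ * σ) * ‖K‖
  let Φ : ℕ → ℝ := fun n => ‖xp - x n‖ ^ 2 / (2 * σ) + ‖yp - y n‖ ^ 2 / (2 * τ)
    - ⟪K (x n - xp), y n - y (n - 1)⟫
  have hstep : ∀ n : ℕ,
      (∑ i, f i (x (n + 1)) + ⟪K (x (n + 1)), yp⟫ - φ yp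
          - (∑ i, f i xp + ⟪K xp, y (n + 1)⟫ - φ (y (n + 1))))
        + ‖x (n + 1) - x n‖ ^ 2 / (2 * σ) + ‖y (n + 1) - y n‖ ^ 2 / (2 * τ)
        + ⟪K (x (n + 1) - x n), y n - y (n - 1)⟫
        - ∑ i, Lc i / 2 * ‖x (n + 1) - x (n - dly n i)‖ ^ 2
      ≤ Φ n - Φ (n + 1) := by
    intro n
    have := pdpiag_step_le hconv hsmooth φ K hσ (xp := xp) (fun i => x (n - dly n i))
      (hxiter n (by positivity)) (hdual n (by positivity))
    simp only [sub_div] at this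
    simp only [Φ]
    push_cast
    rw [add_sub_cancel_right]
    linarith
  have htel := (sum_le_sum fun n _ => hstep n).trans_eq (sum_range_sub' Φ (m + 1))
  simp only [Φ, sum_add_distrib, sum_sub_distrib, Nat.cast_zero, zero_sub, hy0 (-1) (by norm_num),
    sub_self, inner_zero_right, sub_zero] at htel
  push_cast at htel
  rw [add_sub_cancel_right] at htel
  have hfinal : ⟪K (x (m + 1) - xp), y (m + 1) - y m⟫
      ≤ τ * σ * ‖K‖ ^ 2 * (‖xp - x (m + 1)‖ ^ 2 / (2 * σ)) + ‖y (m + 1) - y m‖ ^ 2 / (2 * τ) := by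
    have e : τ * σ * ‖K‖ ^ 2 * (‖xp - x (m + 1)‖ ^ 2 / (2 * σ))
        = τ / 2 * ‖K‖ ^ 2 * ‖x (m + 1) - xp‖ ^ 2 := by
      rw [norm_sub_rev]; field_simp
    rw [e]; exact inner_apply_le_young K hτ _ _
  have hcross : -∑ n ∈ range (m + 1), ⟪K (x (n + 1) - x n), y n - y (n - 1)⟫
      ≤ c * ∑ n ∈ range (m + 1), ‖x (n + 1) - x n‖ ^ 2 / (2 * σ)
        + c * ∑ n ∈ range m, ‖y (n + 1) - y n‖ ^ 2 / (2 * τ) := by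
    have hshift : ∑ n ∈ range (m + 1), ‖y n - y (n - 1)‖ ^ 2 / (2 * τ)
        = ∑ n ∈ range m, ‖y (n + 1) - y n‖ ^ 2 / (2 * τ) := by
      rw [sum_range_succ']
      simp [hy0 (-1) (by norm_num)]
    rw [← hshift, ← mul_add, ← sum_add_distrib, mul_sum, ← sum_neg_distrib]
    exact sum_le_sum fun n _ => (neg_le_abs _).trans (abs_inner_apply_le_sqrt_mul K hσ hτ _ _)
  have herr : ∑ n ∈ range (m + 1), ∑ i, Lc i / 2 * ‖x (n + 1) - x (n - dly n i)‖ ^ 2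
      ≤ σ * (∑ i, Lc i) * (T + 1) ^ 2 * ∑ n ∈ range (m + 1), ‖x (n + 1) - x n‖ ^ 2 / (2 * σ) := by
    -- an `LSmooth` constant can be negative only on the zero space
    rcases subsingleton_or_nontrivial (EuclideanSpace ℝ (Fin d₁)) with hE | hE
    · have h0 : ∀ v : EuclideanSpace ℝ (Fin d₁), ‖v‖ = 0 := fun v => by
        rw [Subsingleton.elim v 0, norm_zero]
      simp [h0]
    · calc _ ≤ (∑ i, Lc i / 2) * (T + 1) ^ 2 * ∑ n ∈ range (m + 1), ‖x (n + 1) - x n‖ ^ 2 :=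
            sum_delayed_norm_sub_sq_le hx0 (fun i => by linarith [(hsmooth i).nonneg]) hdly _
        _ = _ := by rw [← sum_div, ← sum_div]; field_simp
  have hdy := sum_range_succ (fun n : ℕ => ‖y (n + 1) - y n‖ ^ 2 / (2 * τ)) m
  simp only [sum_add_distrib, sum_sub_distrib]
  linarith

theorem stmt_5_general
    (d₁ d₂ N T : ℕ)
    (f : Fin N → EuclideanSpace ℝ (Fin d₁) → ℝ) (Lc : Fin N → ℝ)
    (hconv : ∀ i, ConvexOn ℝ Set.univ (f i))
    (hsmooth : ∀ i, LSmooth (f i) (Lc i))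
    (hstar : EuclideanSpace ℝ (Fin d₂) → EReal)
    (hproper : EProper hstar) (hconvh : EConvexFn hstar)
    (K : EuclideanSpace ℝ (Fin d₁) →L[ℝ] EuclideanSpace ℝ (Fin d₂))
    (σ τ : ℝ) (hσ : 0 < σ) (hτ : 0 < τ)
    (x : ℤ → EuclideanSpace ℝ (Fin d₁)) (y : ℤ → EuclideanSpace ℝ (Fin d₂))
    (hx0 : ∀ k : ℤ, k ≤ 0 → x k = x 0) (hy0 : ∀ k : ℤ, k ≤ 0 → y k = y 0)
    (dly : ℤ → Fin N → ℕ) (hdly : ∀ (k : ℤ) (i : Fin N), dly k i ≤ T)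
    (hxiter : ∀ k : ℤ, 0 ≤ k →
      x (k + 1) = x k - σ • (∑ i, gradient (f i) (x (k - (dly k i : ℤ))))
        - σ • (ContinuousLinearMap.adjoint K) ((2 : ℝ) • y k - y (k - 1)))
    (hyiter : ∀ k : ℤ, 0 ≤ k →
      IsProxPt (fun u => (τ : EReal) * hstar u) (y k + τ • K (x (k + 1))) (y (k + 1)))
 :
    ∀ M : ℕ, 1 ≤ M → ∀ (xp : EuclideanSpace ℝ (Fin d₁)) (yp : EuclideanSpace ℝ (Fin d₂)),
      (∑ k ∈ Finset.Icc (1 : ℤ) (M : ℤ),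
          (Lagr (fun z => ∑ i, f i z) hstar K (x k) yp - Lagr (fun z => ∑ i, f i z) hstar K xp (y k)))
        + (((1 - τ * σ * ‖K‖ ^ 2) * (‖xp - x (M : ℤ)‖ ^ 2 / (2 * σ))
            + ‖yp - y (M : ℤ)‖ ^ 2 / (2 * τ)
            + (1 - Real.sqrt (τ * σ) * ‖K‖ - σ * (∑ i, Lc i) * ((T : ℝ) + 1) ^ 2)
              * ∑ k ∈ Finset.Icc (1 : ℤ) (M : ℤ), ‖x k - x (k - 1)‖ ^ 2 / (2 * σ)
            + (1 - Real.sqrt (τ * σ) * ‖K‖)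
              * ∑ k ∈ Finset.Icc (1 : ℤ) ((M : ℤ) - 1), ‖y k - y (k - 1)‖ ^ 2 / (2 * τ) : ℝ) : EReal)
        ≤ ((‖xp - x 0‖ ^ 2 / (2 * σ) + ‖yp - y 0‖ ^ 2 / (2 * τ) : ℝ) : EReal) := by
  intro M hM xp yp
  obtain ⟨⟨z₀, hz₀⟩, hbot⟩ := hproper
  have hyfin : ∀ k : ℤ, 0 ≤ k → hstar (y (k + 1)) ≠ ⊤ :=
    fun k hk => (hyiter k hk).ne_top hτ hbot hz₀
  by_cases hyp : hstar yp = ⊤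
  · rw [← add_sum_erase _ _ (mem_Icc.2 ⟨le_rfl, by omega⟩), Lagr_eq_bot _ K _ hyp,
      EReal.bot_sub, EReal.bot_add, EReal.bot_add]
    exact bot_le
  have hgap : ∀ k ∈ Icc (1 : ℤ) M,
      Lagr (fun z => ∑ i, f i z) hstar K (x k) yp - Lagr (fun z => ∑ i, f i z) hstar K xp (y k)
        = (((∑ i, f i (x k) + ⟪K (x k), yp⟫ - (hstar yp).toReal)
          - (∑ i, f i xp + ⟪K xp, y k⟫ - (hstar (y k)).toReal) : ℝ) : EReal) := by
    intro k hk
    have hk : hstar (y k) ≠ ⊤ := by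
      simpa using hyfin (k - 1) (by linarith [(mem_Icc.1 hk).1])
    rw [Lagr_eq_coe _ K _ hyp (hbot yp), Lagr_eq_coe _ K _ hk (hbot _), ← EReal.coe_sub]
  rw [sum_congr rfl hgap, ← EReal.coe_finset_sum, ← EReal.coe_add, EReal.coe_le_coe_iff]
  refine pdpiag_telescoped_bound_real hconv hsmooth (fun u => (hstar u).toReal) K hσ hτ hx0 hy0
    hdly hxiter yp (fun k hk => ?_) M hM xp
  exact (hconvh.convexOn_toReal hbot).sub_le_inner_of_prox hτ (hyfin k hk)
    (fun u hu => (hyiter k hk).toReal_le hbot (hyfin k hk) hu) hyp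

/-- Telescoped estimate for the extrapolated PD-PIAG iteration, inequality (26). -/
theorem stmt_5
    (d₁ d₂ N T : ℕ)
    (f : Fin N → EuclideanSpace ℝ (Fin d₁) → ℝ) (Lc : Fin N → ℝ)
    (hconv : ∀ i, ConvexOn ℝ Set.univ (f i))
    (hsmooth : ∀ i, LSmooth (f i) (Lc i))
    (hstar : EuclideanSpace ℝ (Fin d₂) → EReal)
    (hproper : EProper hstar) (hlsc : LowerSemicontinuous hstar) (hconvh : EConvexFn hstar)
    (K : EuclideanSpace ℝ (Fin d₁) →L[ℝ] EuclideanSpace ℝ (Fin d₂))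
    (σ τ : ℝ) (hσ : 0 < σ) (hτ : 0 < τ)
    (x : ℤ → EuclideanSpace ℝ (Fin d₁)) (y : ℤ → EuclideanSpace ℝ (Fin d₂))
    (hx0 : ∀ k : ℤ, k ≤ 0 → x k = x 0) (hy0 : ∀ k : ℤ, k ≤ 0 → y k = y 0)
    (dly : ℤ → Fin N → ℕ) (hdly : ∀ (k : ℤ) (i : Fin N), dly k i ≤ T)
    (hxiter : ∀ k : ℤ, 0 ≤ k →
      x (k + 1) = x k - σ • (∑ i, gradient (f i) (x (k - (dly k i : ℤ))))
        - σ • (ContinuousLinearMap.adjoint K) ((2 : ℝ) • y k - y (k - 1)))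
    (hyiter : ∀ k : ℤ, 0 ≤ k →
      IsProxPt (fun u => (τ : EReal) * hstar u) (y k + τ • K (x (k + 1))) (y (k + 1)))
 :
    ∀ M : ℕ, 1 ≤ M → ∀ (xp : EuclideanSpace ℝ (Fin d₁)) (yp : EuclideanSpace ℝ (Fin d₂)),
      (∑ k ∈ Finset.Icc (1 : ℤ) (M : ℤ),
          (Lagr (fun z => ∑ i, f i z) hstar K (x k) yp - Lagr (fun z => ∑ i, f i z) hstar K xp (y k)))
        + (((1 - τ * σ * ‖K‖ ^ 2) * (‖xp - x (M : ℤ)‖ ^ 2 / (2 * σ))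
            + ‖yp - y (M : ℤ)‖ ^ 2 / (2 * τ)
            + (1 - Real.sqrt (τ * σ) * ‖K‖ - σ * (∑ i, Lc i) * ((T : ℝ) + 1) ^ 2)
              * ∑ k ∈ Finset.Icc (1 : ℤ) (M : ℤ), ‖x k - x (k - 1)‖ ^ 2 / (2 * σ)
            + (1 - Real.sqrt (τ * σ) * ‖K‖)
              * ∑ k ∈ Finset.Icc (1 : ℤ) ((M : ℤ) - 1), ‖y k - y (k - 1)‖ ^ 2 / (2 * τ) : ℝ) : EReal)
        ≤ ((‖xp - x 0‖ ^ 2 / (2 * σ) + ‖yp - y 0‖ ^ 2 / (2 * τ) : ℝ) : EReal) :=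
  stmt_5_general d₁ d₂ N T f Lc hconv hsmooth hstar hproper hconvh K σ τ hσ hτ x y hx0 hy0 dly hdly
    hxiter hyiter
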